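/- arXiv:1510.06050 — 3 statements merged into one kernel-verified Lean document; each statement's English description precedes it below -/
import Mathlib

section
/- The sequence n ↦ (2π/n)·log(F_{n+1}) is monotonically increasing in n (for n ≥ 1). -/
open Real

namespace DetDensityAux

open Nat

/-- d'Ocagne-type identity. -/
lemma docagne : ∀ j d : ℕ,
    (fib (d + j + 2) : ℤ) * fib j + (-1) ^ j * fib (d + 1) = fib (d + j + 1) * fib (j + 1) := by
  intro j
  induction j using Nat.twoStepInduction with
  | zero => intro d; simp
  | one =>
      intro d
      have e1 : (fib (d + 1 + 2) : ℤ) = fib (d + 1) + fib (d + 2) := by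
        exact_mod_cast congrArg (Nat.cast (R := ℤ)) (fib_add_two (n := d + 1))
      simp only [fib_one, pow_one]
      push_cast
      have : d + 1 + 2 = d + 3 := by omega
      rw [this] at e1
      rw [show d + 1 + 1 = d + 2 from by omega] at *
      rw [show (fib 2 : ℤ) = 1 from by norm_num [fib]]
      linarith [e1]
  | more j ih1 ih2 =>
      intro d
      have h1 := ih1 (d + 2)
      have h2 := ih2 (d + 1)
      rw [show d + 2 + j + 2 = d + j + 4 from by omega, show d + 2 + 1 = d + 3 from by omega,
        show d + 2 + j + 1 = d + j + 3 from by omega] at h1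
      rw [show d + 1 + (j + 1) + 2 = d + j + 4 from by omega,
        show d + 1 + 1 = d + 2 from by omega,
        show d + 1 + (j + 1) + 1 = d + j + 3 from by omega] at h2
      rw [show d + (j + 2) + 2 = d + j + 4 from by omega,
        show d + (j + 2) + 1 = d + j + 3 from by omega]
      have e1 : (fib (j + 2) : ℤ) = fib j + fib (j + 1) := by
        exact_mod_cast congrArg (Nat.cast (R := ℤ)) (fib_add_two (n := j))
      have e2 : (fib (j + 3) : ℤ) = fib (j + 1) + fib (j + 2) := by
        exact_mod_cast congrArg (Nat.cast (R := ℤ)) (fib_add_two (n := j + 1))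
      have e3 : (fib (d + 3) : ℤ) = fib (d + 1) + fib (d + 2) := by
        exact_mod_cast congrArg (Nat.cast (R := ℤ)) (fib_add_two (n := d + 1))
      have sgn1 : ((-1 : ℤ)) ^ (j + 1) = -(-1) ^ j := by ring
      have sgn2 : ((-1 : ℤ)) ^ (j + 2) = (-1) ^ j := by ring
      rw [sgn2, e1, e2]
      rw [sgn1] at h2
      rw [e3] at h1
      ring_nf
      ring_nf at h1 h2
      linarith [h1, h2]

/-- key pair inequality: for odd k = 2t+1 with k+1 ≤ n (n = 2t+2+e),
    fib(n+2)^2 * fib(2t+1) ≥ fib(n+1)^2 * fib(2t+3). -/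
lemma pairP (t e : ℕ) :
    fib (2 * t + e + 3) ^ 2 * fib (2 * t + 3) ≤ fib (2 * t + e + 4) ^ 2 * fib (2 * t + 1) := by
  have h1 := docagne (2 * t + 1) (e + 1)
  have h2 := docagne (2 * t + 2) e
  rw [show e + 1 + (2 * t + 1) + 2 = 2 * t + e + 4 from by omega,
    show e + 1 + 1 = e + 2 from by omega,
    show e + 1 + (2 * t + 1) + 1 = 2 * t + e + 3 from by omega,
    show 2 * t + 1 + 1 = 2 * t + 2 from by omega] at h1
  rw [show e + (2 * t + 2) + 2 = 2 * t + e + 4 from by omega,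
    show e + (2 * t + 2) + 1 = 2 * t + e + 3 from by omega,
    show 2 * t + 2 + 1 = 2 * t + 3 from by omega] at h2
  have s1 : ((-1 : ℤ)) ^ (2 * t + 1) = -1 := by
    rw [pow_succ, pow_mul]; norm_num
  have s2 : ((-1 : ℤ)) ^ (2 * t + 2) = 1 := by
    rw [show 2 * t + 2 = 2 * (t + 1) from by omega, pow_mul]; norm_num
  rw [s1] at h1
  rw [s2] at h2
  -- now h1 : F2 * fib(2t+1) - A = F1 * fib(2t+2)
  -- h2 : F2 * fib(2t+2) + B = F1 * fib(2t+3)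
  have hAB : (fib (e + 1) : ℤ) ≤ fib (e + 2) := by
    exact_mod_cast fib_le_fib_succ
  have hF : (fib (2 * t + e + 3) : ℤ) ≤ fib (2 * t + e + 4) := by
    exact_mod_cast fib_le_fib_succ
  have hBpos : (0 : ℤ) ≤ fib (e + 1) := by positivity
  have hF2pos : (0 : ℤ) ≤ fib (2 * t + e + 4) := by positivity
  have key : (fib (2 * t + e + 3) : ℤ) * fib (e + 1) ≤ fib (2 * t + e + 4) * fib (e + 2) :=
    mul_le_mul hF hAB hBpos hF2pos
  have goalZ : (fib (2 * t + e + 3) : ℤ) ^ 2 * fib (2 * t + 3) ≤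
      (fib (2 * t + e + 4) : ℤ) ^ 2 * fib (2 * t + 1) := by
    nlinarith [h1, h2, key]
  exact_mod_cast goalZ

/-- chained inequality: fib(n+2)^(2t) ≥ fib(n+1)^(2t) * fib(2t+1) for 2t ≤ n. -/
lemma chain : ∀ t : ℕ, ∀ n : ℕ, 2 * t ≤ n →
    fib (n + 1) ^ (2 * t) * fib (2 * t + 1) ≤ fib (n + 2) ^ (2 * t) := by
  intro t
  induction t with
  | zero => intro n _; simp
  | succ t ih =>
      intro n hn
      have h2t : 2 * t ≤ n := by omega
      have ihn := ih n h2t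
      obtain ⟨e, he⟩ : ∃ e, n = 2 * t + 2 + e := ⟨n - (2 * t + 2), by omega⟩
      have hp := pairP t e
      rw [show 2 * t + e + 3 = n + 1 from by omega,
        show 2 * t + e + 4 = n + 2 from by omega] at hp
      have expand : ∀ x : ℕ, x ^ (2 * (t + 1)) = x ^ (2 * t) * x ^ 2 := by
        intro x; rw [← pow_add]; ring_nf
      rw [expand, expand, show 2 * (t + 1) + 1 = 2 * t + 3 from by omega]
      calc fib (n + 1) ^ (2 * t) * fib (n + 1) ^ 2 * fib (2 * t + 3)
          = fib (n + 1) ^ (2 * t) * (fib (n + 1) ^ 2 * fib (2 * t + 3)) := by ring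
        _ ≤ fib (n + 1) ^ (2 * t) * (fib (n + 2) ^ 2 * fib (2 * t + 1)) :=
            Nat.mul_le_mul_left _ hp
        _ = fib (n + 1) ^ (2 * t) * fib (2 * t + 1) * fib (n + 2) ^ 2 := by ring
        _ ≤ fib (n + 2) ^ (2 * t) * fib (n + 2) ^ 2 :=
            Nat.mul_le_mul_right _ ihn

/-- Catalan identity at odd index: fib(2t+3) * fib(2t+1) = fib(2t+2)^2 + 1. -/
lemma catalan_odd (t : ℕ) : fib (2 * t + 3) * fib (2 * t + 1) = fib (2 * t + 2) ^ 2 + 1 := by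
  have h := docagne (2 * t + 1) 0
  rw [show 0 + (2 * t + 1) + 2 = 2 * t + 3 from by omega,
    show 0 + (2 * t + 1) + 1 = 2 * t + 2 from by omega,
    show 2 * t + 1 + 1 = 2 * t + 2 from by omega] at h
  have s1 : ((-1 : ℤ)) ^ (2 * t + 1) = -1 := by
    rw [pow_succ, pow_mul]; norm_num
  rw [s1, show (0:ℕ) + 1 = 1 from rfl] at h
  simp only [fib_one, Nat.cast_one] at h
  have : (fib (2 * t + 3) : ℤ) * fib (2 * t + 1) = fib (2 * t + 2) ^ 2 + 1 := by
    nlinarith [h]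
  exact_mod_cast this

/-- key inequality: fib(n+1)^(n+1) ≤ fib(n+2)^n. -/
lemma key (n : ℕ) : fib (n + 1) ^ (n + 1) ≤ fib (n + 2) ^ n := by
  rcases Nat.even_or_odd n with ⟨t, ht⟩ | ⟨t, ht⟩
  · -- n = 2t
    subst ht
    rw [show t + t = 2 * t from by omega]
    have h := chain t (2 * t) (le_refl _)
    rw [pow_succ]
    exact h
  · -- n = 2t+1
    subst ht
    have h := chain t (2 * t + 1) (by omega)
    have hc := catalan_odd t
    -- goal : fib (2t+2)^(2t+2) ≤ fib (2t+3)^(2t+1)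
    rw [show 2 * t + 1 + 1 = 2 * t + 2 from by omega, show 2 * t + 1 + 2 = 2 * t + 3 from by omega]
    calc fib (2 * t + 2) ^ (2 * t + 1 + 1)
        = fib (2 * t + 2) ^ (2 * t) * fib (2 * t + 2) ^ 2 := by rw [← pow_add]
      _ ≤ fib (2 * t + 2) ^ (2 * t) * (fib (2 * t + 3) * fib (2 * t + 1)) := by
          apply Nat.mul_le_mul_left
          rw [hc]; omega
      _ = fib (2 * t + 2) ^ (2 * t) * fib (2 * t + 1) * fib (2 * t + 3) := by ring
      _ ≤ fib (2 * t + 3) ^ (2 * t) * fib (2 * t + 3) := Nat.mul_le_mul_right _ h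
      _ = fib (2 * t + 3) ^ (2 * t + 1) := by rw [pow_succ]

/-- one monotonicity step for the density. -/
lemma step (n : ℕ) (hn : 1 ≤ n) :
    (2 * π / n) * Real.log (fib (n + 1)) ≤ (2 * π / (n + 1)) * Real.log (fib (n + 2)) := by
  have hf1 : (1 : ℝ) ≤ (fib (n + 1) : ℝ) := by
    exact_mod_cast fib_pos.mpr (by omega : 0 < n + 1)
  have hf2 : (1 : ℝ) ≤ (fib (n + 2) : ℝ) := by
    exact_mod_cast fib_pos.mpr (by omega : 0 < n + 2)
  have hx : (0 : ℝ) ≤ Real.log (fib (n + 1)) := Real.log_nonneg hf1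
  have hkey : ((fib (n + 1) : ℝ)) ^ (n + 1) ≤ ((fib (n + 2) : ℝ)) ^ n := by
    exact_mod_cast key n
  have hlog : Real.log ((fib (n + 1) : ℝ) ^ (n + 1)) ≤ Real.log ((fib (n + 2) : ℝ) ^ n) :=
    Real.log_le_log (by positivity) hkey
  rw [Real.log_pow, Real.log_pow] at hlog
  -- hlog : (n+1) * log fib(n+1) ≤ n * log fib(n+2)
  have hn0 : (0 : ℝ) < (n : ℝ) := by exact_mod_cast hn
  have hn1 : (0 : ℝ) < ((n : ℝ) + 1) := by linarith
  rw [div_mul_eq_mul_div, div_mul_eq_mul_div]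
  rw [show ((n : ℕ) + 1 : ℕ) = n + 1 from rfl]
  push_cast
  rw [div_le_div_iff₀ hn0 hn1]
  have h2pi : (0 : ℝ) ≤ 2 * π := by positivity
  have hmul := mul_le_mul_of_nonneg_left hlog h2pi
  push_cast at hmul
  nlinarith [hmul]

end DetDensityAux

theorem det_density_monotone :
    ∀ m n : ℕ, 1 ≤ m → m ≤ n →
      (2 * π / m) * Real.log (Nat.fib (m + 1)) ≤
        (2 * π / n) * Real.log (Nat.fib (n + 1)) := by
  intro m n hm hmn
  induction n, hmn using Nat.le_induction with
  | base => exact le_refl _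
  | succ n hn ih =>
      exact le_trans ih (by exact_mod_cast DetDensityAux.step n (le_trans hm hn))
end

section
/- The set of real numbers of the form 2π·log((m+1)·F_n + F_{n-1})/(m+n), where m ranges over positive even integers and n over integers ≥ 4 with n ≡ 0 or 1 (mod 3), is dense in the interval [0, 2π·log(φ)]. -/
/-!
The determinant `(m + 1) F_n + F_{n-1}` lies between `F_n` and `(m + 2) F_n`, and `F_n` grows
like `φ ^ n`. So if `n → ∞` and `m / n → c`, then `log det / (m + n) → log φ / (1 + c)`, and
`2π log φ / (1 + c)` sweeps out `(0, 2π log φ)` as `c` ranges over `(0, ∞)`. The choice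
`n = 3k`, `m = 2⌈(3c/2) k⌉` realises the ratio `c` within the parity and residue constraints.
-/

open Real Filter Topology Set
open scoped goldenRatio

namespace Real

theorem fib_succ_le_goldenRatio_pow (n : ℕ) : (Nat.fib (n + 1) : ℝ) ≤ φ ^ n := by
  have h := goldenRatio_mul_fib_succ_add_fib n
  have : φ * Nat.fib (n + 1) ≤ φ * φ ^ n := by
    rw [← pow_succ', ← h]
    exact le_add_of_nonneg_right (Nat.cast_nonneg _)
  exact le_of_mul_le_mul_left this goldenRatio_pos

theorem goldenRatio_pow_le_fib_add_two (n : ℕ) : φ ^ n ≤ Nat.fib (n + 2) := by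
  cases n with
  | zero => simp
  | succ n =>
    rw [← goldenRatio_mul_fib_succ_add_fib n, Nat.fib_add_two, Nat.fib_add_two]
    push_cast
    nlinarith [goldenRatio_lt_two, (Nat.cast_nonneg (Nat.fib (n + 1)) : (0 : ℝ) ≤ _)]

theorem tendsto_log_fib_div_atTop :
    Tendsto (fun n : ℕ => log (Nat.fib n) / n) atTop (𝓝 (log φ)) := by
  rw [← tendsto_add_atTop_iff_nat 2]
  have hL : 0 < log φ := log_pos one_lt_goldenRatio
  have hpos : ∀ k : ℕ, (0 : ℝ) < ((k + 2 : ℕ) : ℝ) := fun k => by positivity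
  have lower : ∀ k : ℕ, log φ * (k / (k + 2)) ≤ log (Nat.fib (k + 2)) / ((k + 2 : ℕ) : ℝ) := by
    intro k
    rw [le_div_iff₀ (hpos k)]
    calc log φ * (k / (k + 2)) * ((k + 2 : ℕ) : ℝ) = k * log φ := by push_cast; field_simp
      _ = log (φ ^ k) := by rw [log_pow]
      _ ≤ log (Nat.fib (k + 2)) :=
        log_le_log (pow_pos goldenRatio_pos k) (goldenRatio_pow_le_fib_add_two k)
  have upper : ∀ k : ℕ, log (Nat.fib (k + 2)) / ((k + 2 : ℕ) : ℝ) ≤ log φ := by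
    intro k
    rw [div_le_iff₀ (hpos k)]
    calc log (Nat.fib (k + 2)) ≤ log (φ ^ (k + 1)) :=
          log_le_log (by exact_mod_cast Nat.fib_pos.2 (by omega))
            (fib_succ_le_goldenRatio_pow (k + 1))
      _ = (k + 1) * log φ := by rw [log_pow]; push_cast; ring
      _ ≤ log φ * ((k + 2 : ℕ) : ℝ) := by push_cast; nlinarith
  have hlim : Tendsto (fun k : ℕ => log φ * (k / (k + 2))) atTop (𝓝 (log φ)) := by
    simpa using (tendsto_natCast_div_add_atTop (2 : ℝ)).const_mul (log φ)
  exact tendsto_of_tendsto_of_tendsto_of_le_of_le hlim tendsto_const_nhds lower upper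

end Real

theorem tendsto_natCeil_mul_div_atTop {d : ℝ} (hd : 0 ≤ d) :
    Tendsto (fun k : ℕ => (⌈d * k⌉₊ : ℝ) / k) atTop (𝓝 d) := by
  have upper : Tendsto (fun k : ℕ => d + 1 / (k : ℝ)) atTop (𝓝 d) := by
    simpa using tendsto_one_div_atTop_nhds_zero_nat.const_add d
  refine tendsto_of_tendsto_of_tendsto_of_le_of_le' tendsto_const_nhds upper ?_ ?_
  all_goals
    filter_upwards [eventually_gt_atTop 0] with k hk
    have hk' : (0 : ℝ) < k := Nat.cast_pos.2 hk
  · rw [le_div_iff₀ hk']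
    exact Nat.le_ceil _
  · rw [div_le_iff₀ hk', add_mul, one_div_mul_cancel hk'.ne']
    exact (Nat.ceil_lt_add_one (by positivity)).le

theorem tendsto_log_div_atTop_of_tendsto_div {ι : Type*} {l : Filter ι} {a b : ι → ℝ} {c : ℝ}
    (ha : ∀ᶠ i in l, 1 ≤ a i) (hb : Tendsto b l atTop)
    (hab : Tendsto (fun i => a i / b i) l (𝓝 c)) :
    Tendsto (fun i => log (a i) / b i) l (𝓝 0) := by
  have hlog : Tendsto (fun i => log (b i) / b i) l (𝓝 0) :=
    isLittleO_log_id_atTop.tendsto_div_nhds_zero.comp hb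
  have hinv : Tendsto (fun i => a i / b i * (b i)⁻¹) l (𝓝 0) := by
    simpa using hab.mul (tendsto_inv_atTop_zero.comp hb)
  refine tendsto_of_tendsto_of_tendsto_of_le_of_le' tendsto_const_nhds
    (by simpa using hlog.add hinv) ?_ ?_
  all_goals filter_upwards [ha, hb.eventually_gt_atTop 0] with i hai hbi
  · exact div_nonneg (log_nonneg hai) hbi.le
  · -- `log a = log b + log (a / b) ≤ log b + a / b`
    have : log (a i) ≤ log (b i) + a i / b i := by
      have := log_le_sub_one_of_pos (div_pos (by linarith : 0 < a i) hbi)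
      rw [log_div (by linarith) hbi.ne'] at this
      linarith
    rw [← div_eq_mul_inv, ← add_div]
    exact div_le_div_of_nonneg_right this hbi.le

theorem log_det_mem_Icc (m : ℕ) {n : ℕ} (hn : 0 < n) :
    log ((m + 1) * Nat.fib n + Nat.fib (n - 1)) ∈
      Icc (log (Nat.fib n)) (log (Nat.fib n) + log (m + 2)) := by
  have hF : (0 : ℝ) < Nat.fib n := by exact_mod_cast Nat.fib_pos.2 hn
  have hF' : (Nat.fib (n - 1) : ℝ) ≤ Nat.fib n := by exact_mod_cast Nat.fib_mono (n.sub_le 1)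
  have hm : (0 : ℝ) ≤ m := Nat.cast_nonneg m
  constructor
  · exact log_le_log hF (by nlinarith [(Nat.cast_nonneg _ : (0 : ℝ) ≤ Nat.fib (n - 1))])
  · rw [← log_mul hF.ne' (by positivity)]
    exact log_le_log (by positivity) (by nlinarith)

theorem tendsto_log_det_div_crossing {ι : Type*} {l : Filter ι} {m n : ι → ℕ} {c : ℝ}
    (hc : 0 ≤ c) (hn : Tendsto n l atTop) (hmn : Tendsto (fun i => (m i : ℝ) / n i) l (𝓝 c)) :
    Tendsto (fun i => log ((m i + 1) * Nat.fib (n i) + Nat.fib (n i - 1)) / (m i + n i)) l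
      (𝓝 (log φ / (1 + c))) := by
  have hn' : Tendsto (fun i => (n i : ℝ)) l atTop := tendsto_natCast_atTop_atTop.comp hn
  have hfib := tendsto_log_fib_div_atTop.comp hn
  have hm2 : Tendsto (fun i => log ((m i : ℝ) + 2) / n i) l (𝓝 0) := by
    refine tendsto_log_div_atTop_of_tendsto_div (c := c) (Eventually.of_forall fun i => by
      linarith [(Nat.cast_nonneg (m i) : (0 : ℝ) ≤ m i)]) hn' ?_
    have h2 : Tendsto (fun i => (2 : ℝ) / n i) l (𝓝 0) := tendsto_const_nhds.div_atTop hn'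
    simpa [add_div] using hmn.add h2
  have hdet : Tendsto (fun i => log ((m i + 1) * Nat.fib (n i) + Nat.fib (n i - 1)) / n i) l
      (𝓝 (log φ)) := by
    refine tendsto_of_tendsto_of_tendsto_of_le_of_le' hfib (by simpa using hfib.add hm2) ?_ ?_
    all_goals
      filter_upwards [hn.eventually_gt_atTop 0] with i hi
      have hbounds := log_det_mem_Icc (m i) hi
      have hi' : (0 : ℝ) < n i := Nat.cast_pos.2 hi
    · exact div_le_div_of_nonneg_right hbounds.1 hi'.le
    · rw [← add_div]
      exact div_le_div_of_nonneg_right hbounds.2 hi'.le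
  have hquot := hdet.div ((tendsto_const_nhds (x := (1 : ℝ))).add hmn) (by linarith)
  refine hquot.congr' ?_
  filter_upwards [hn.eventually_gt_atTop 0] with i hi
  have hi' : (n i : ℝ) ≠ 0 := Nat.cast_ne_zero.2 hi.ne'
  simp only [Pi.div_apply]
  field_simp
  ring

theorem det_densities_dense :
    ∀ x ∈ Set.Icc (0 : ℝ) (2 * π * Real.log ((1 + Real.sqrt 5) / 2)),
      x ∈ closure {y : ℝ | ∃ m n : ℕ, 0 < m ∧ Even m ∧ 4 ≤ n ∧
        (n % 3 = 0 ∨ n % 3 = 1) ∧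
        y = 2 * π * Real.log ((m + 1) * Nat.fib n + Nat.fib (n - 1)) / (m + n)} := by
  have hL : 0 < log φ := log_pos one_lt_goldenRatio
  suffices h : Ioo 0 (2 * π * log φ) ⊆ closure _ by
    rw [← closure_Ioo (by positivity : 0 < 2 * π * log φ).ne]
    exact closure_minimal h isClosed_closure
  rintro x ⟨hx0, hx1⟩
  set c := 2 * π * log φ / x - 1 with hc
  have hc0 : 0 < c := by rw [hc, sub_pos, one_lt_div hx0]; exact hx1
  have hratio : Tendsto (fun k : ℕ => ((2 * ⌈3 * c / 2 * k⌉₊ : ℕ) : ℝ) / (3 * k : ℕ)) atTop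
      (𝓝 c) := by
    have h := (tendsto_natCeil_mul_div_atTop (by positivity : 0 ≤ 3 * c / 2)).const_mul (2 / 3)
    rw [show 2 / 3 * (3 * c / 2) = c by ring] at h
    refine h.congr fun k => ?_
    push_cast
    ring
  have hn : Tendsto (3 * ·) atTop atTop := tendsto_id.const_mul_atTop' (by norm_num : 0 < 3)
  have hlim := (tendsto_log_det_div_crossing hc0.le hn hratio).const_mul (2 * π)
  rw [show 2 * π * (log φ / (1 + c)) = x by rw [hc]; field_simp; ring] at hlim
  refine mem_closure_of_tendsto hlim ?_
  filter_upwards [eventually_ge_atTop 2] with k hk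
  refine ⟨_, _, ?_, even_two_mul _, by omega, Or.inl (by omega), (mul_div_assoc _ _ _).symm⟩
  exact Nat.mul_pos two_pos (Nat.ceil_pos.2 (by positivity))
end

section
/- Fix x ∈ [0, 2π·log(φ)). For every ε > 0 there exist positive integers m (even) and n with n ≡ 0 or 1 (mod 3), n ≥ 4, such that |(2π/(m+n))·(log(m+1) + n·log(φ)) − x| < ε. -/
/-!
For fixed `n`, the density `m ↦ detDensity m n` is close to `2π log φ` at `m = 2` once `n` is
large, tends to `0` as `m → ∞`, and drops by at most `4π (1 + log φ) / n` when `m` grows by `2`.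
So for a large multiple `n` of `3` its values at even `m` descend through `[0, 2π log φ)` in steps
shorter than `ε`, and one of them lands in `(x, x + ε)`.
-/

open Real Filter Topology goldenRatio

noncomputable def detDensity (m n : ℝ) : ℝ :=
  2 * π / (m + n) * (log (m + 1) + n * log φ)

lemma div_sub_div_le_of_le_mul {a a' d d' C : ℝ} (haa' : a ≤ a') (hd : 0 < d)
    (hdd' : d ≤ d') (haC : a ≤ C * d) : a / d - a' / d' ≤ C * (d' - d) / d' := by
  have hd' : 0 < d' := hd.trans_le hdd'
  calc a / d - a' / d' ≤ a / d - a / d' := by gcongr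
    _ = a * (d' - d) / (d * d') := by field_simp
    _ ≤ C * d * (d' - d) / (d * d') := by gcongr
    _ = C * (d' - d) / d' := by field_simp

lemma exists_mem_Ioo_of_sub_succ_lt {g : ℕ → ℝ} {a b : ℝ} (h0 : a < g 0) (hex : ∃ k, g k < b)
    (hstep : ∀ k, g k - g (k + 1) < b - a) : ∃ k, g k ∈ Set.Ioo a b := by
  classical
  refine ⟨Nat.find hex, ?_, Nat.find_spec hex⟩
  rcases hk : Nat.find hex with _ | j
  · exact h0
  · have hj : b ≤ g j := not_lt.mp (Nat.find_min hex (by omega))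
    linarith [hstep j]

lemma log_goldenRatio_pos : 0 < log φ := log_pos one_lt_goldenRatio

lemma log_add_one_add_mul_le {m n : ℝ} (hm : 0 ≤ m) (hn : 0 ≤ n) :
    log (m + 1) + n * log φ ≤ (1 + log φ) * (m + n) := by
  have hlog : log (m + 1) ≤ m := by linarith [log_le_sub_one_of_pos (by linarith : 0 < m + 1)]
  nlinarith [log_goldenRatio_pos]

lemma detDensity_sub_detDensity_add_two_le {m n : ℝ} (hm : 0 ≤ m) (hn : 0 < n) :
    detDensity m n - detDensity (m + 2) n ≤ 4 * π * (1 + log φ) / n := by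
  have hmono : log (m + 1) + n * log φ ≤ log (m + 2 + 1) + n * log φ := by
    gcongr
    linarith
  have key := div_sub_div_le_of_le_mul hmono (by positivity) (by linarith : m + n ≤ m + 2 + n)
    (log_add_one_add_mul_le hm hn.le)
  calc detDensity m n - detDensity (m + 2) n
      = 2 * π * ((log (m + 1) + n * log φ) / (m + n)
          - (log (m + 2 + 1) + n * log φ) / (m + 2 + n)) := by
        unfold detDensity; ring
    _ ≤ 2 * π * ((1 + log φ) * (m + 2 + n - (m + n)) / (m + 2 + n)) := by gcongr
    _ = 4 * π * (1 + log φ) / (m + 2 + n) := by ring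
    _ ≤ 4 * π * (1 + log φ) / n := by
        have := log_goldenRatio_pos
        gcongr
        linarith

lemma tendsto_detDensity_atTop (n : ℝ) :
    Tendsto (fun m ↦ detDensity m n) atTop (𝓝 0) := by
  have hlog : Tendsto (fun m : ℝ ↦ log (m + 1) / (m + n)) atTop (𝓝 0) := by
    have := (tendsto_pow_log_div_mul_add_atTop 1 (n - 1) 1 one_ne_zero).comp
      (tendsto_atTop_add_const_right atTop 1 tendsto_id)
    refine this.congr fun m ↦ ?_
    simp only [Function.comp_apply, id, pow_one, one_mul]
    ring_nf
  have hinv : Tendsto (fun m : ℝ ↦ (m + n)⁻¹) atTop (𝓝 0) :=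
    tendsto_inv_atTop_zero.comp (tendsto_atTop_add_const_right atTop n tendsto_id)
  have := (hlog.add (hinv.mul_const (n * log φ))).const_mul (2 * π)
  rw [zero_mul, add_zero, mul_zero] at this
  refine this.congr fun m ↦ ?_
  unfold detDensity
  ring

lemma eventually_lt_detDensity_two {x : ℝ} (hx : x < 2 * π * log φ) :
    ∀ᶠ n : ℕ in atTop, x < detDensity 2 n := by
  have hlim := (tendsto_natCast_div_add_atTop (2 : ℝ)).const_mul (2 * π * log φ)
  rw [mul_one] at hlim
  filter_upwards [hlim.eventually_const_lt hx] with n hn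
  calc x < 2 * π * log φ * (n / (n + 2)) := hn
    _ = 2 * π / (2 + n) * (0 + n * log φ) := by field_simp; ring
    _ ≤ detDensity 2 n := by
        unfold detDensity
        gcongr
        exact log_nonneg (by norm_num)

theorem approx_step (x : ℝ)
    (hx : x ∈ Set.Ico (0 : ℝ) (2 * π * Real.log ((1 + Real.sqrt 5) / 2))) :
    ∀ ε > 0, ∃ m n : ℕ, 0 < m ∧ Even m ∧ 4 ≤ n ∧ (n % 3 = 0 ∨ n % 3 = 1) ∧
      |(2 * π / (m + n)) * (Real.log (m + 1) +
        n * Real.log ((1 + Real.sqrt 5) / 2)) - x| < ε := by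
  intro ε hε
  obtain ⟨N, hN⟩ := eventually_atTop.mp ((eventually_lt_detDensity_two hx.2).and
    ((tendsto_const_div_atTop_nhds_zero_nat (4 * π * (1 + log φ))).eventually_lt_const hε))
  set n := 3 * (N + 2)
  obtain ⟨hstart, hn⟩ := hN n (by omega)
  set g : ℕ → ℝ := fun k ↦ detDensity (2 * k + 2) n
  have hg_zero : x < g 0 := by simpa [g] using hstart
  have hg_lt : ∃ k, g k < x + ε :=
    (((tendsto_detDensity_atTop n).comp (tendsto_atTop_add_const_right atTop 2
      (tendsto_natCast_atTop_atTop.const_mul_atTop two_pos))).eventually_lt_const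
      (by linarith [hx.1])).exists
  have hg_step (k : ℕ) : g k - g (k + 1) < x + ε - x := by
    have hdrop := detDensity_sub_detDensity_add_two_le (m := 2 * k + 2) (by positivity)
      (by positivity : (0 : ℝ) < n)
    simp only [g, Nat.cast_succ, show 2 * ((k : ℝ) + 1) + 2 = 2 * k + 2 + 2 by ring]
    linarith
  obtain ⟨k, hk⟩ := exists_mem_Ioo_of_sub_succ_lt hg_zero hg_lt hg_step
  refine ⟨2 * k + 2, n, by omega, ⟨k + 1, by ring⟩, by omega, Or.inl (by omega), ?_⟩
  show |detDensity ((2 * k + 2 : ℕ) : ℝ) n - x| < ε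
  push_cast
  exact abs_sub_lt_iff.mpr ⟨by linarith [hk.2], by linarith [hk.1]⟩
end
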